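/- arXiv:1311.2177 — 3 statements merged into one kernel-verified Lean document; each statement's English description precedes it below -/
import Mathlib

section
/- Let X and Y be nontrivial real Banach spaces and let 1 < p ≤ ∞. If X ⊕_p Y is locally octahedral, then X is locally octahedral. -/
open Metric Set
open scoped ENNReal

noncomputable section

/-- A slice of the closed unit ball determined by `f ∈ S_{X*}` and `α > 0` is
`{x ∈ B_X : f x > 1 - α}`.  `X` has the local diameter 2 property if every slice
of `B_X` has diameter 2. -/
def LocalDiameterTwoProp (X : Type*) [NormedAddCommGroup X] [NormedSpace ℝ X] : Prop :=
  ∀ f : X →L[ℝ] ℝ, ‖f‖ = 1 → ∀ α : ℝ, 0 < α →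
    Metric.diam {x : X | ‖x‖ ≤ 1 ∧ 1 - α < f x} = 2

/-- `X` has the diameter 2 property if every nonempty relatively weakly open
subset of `B_X` has diameter 2. -/
def DiameterTwoProp (X : Type*) [NormedAddCommGroup X] [NormedSpace ℝ X] : Prop :=
  ∀ U : Set (WeakSpace ℝ X), IsOpen U →
    {x : X | ‖x‖ ≤ 1 ∧ toWeakSpace ℝ X x ∈ U}.Nonempty →
    Metric.diam {x : X | ‖x‖ ≤ 1 ∧ toWeakSpace ℝ X x ∈ U} = 2

/-- `X` has the strong diameter 2 property if every convex combination of slices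
of `B_X` has diameter 2. -/
def StrongDiameterTwoProp (X : Type*) [NormedAddCommGroup X] [NormedSpace ℝ X] : Prop :=
  ∀ (n : ℕ) (lam : Fin n → ℝ) (f : Fin n → X →L[ℝ] ℝ) (α : Fin n → ℝ),
    (∀ i, 0 ≤ lam i) → (∑ i, lam i) = 1 → (∀ i, ‖f i‖ = 1) → (∀ i, 0 < α i) →
    Metric.diam {x : X | ∃ g : Fin n → X,
      (∀ i, ‖g i‖ ≤ 1 ∧ 1 - α i < f i (g i)) ∧ x = ∑ i, lam i • g i} = 2

/-- The dual of `X` has the weak* local diameter 2 property if every weak* slice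
`{f ∈ B_{X*} : f x > 1 - α}` (with `x ∈ S_X`, `α > 0`) has diameter 2. -/
def WStarLocalDiameterTwoProp (X : Type*) [NormedAddCommGroup X] [NormedSpace ℝ X] : Prop :=
  ∀ x : X, ‖x‖ = 1 → ∀ α : ℝ, 0 < α →
    Metric.diam {f : X →L[ℝ] ℝ | ‖f‖ ≤ 1 ∧ 1 - α < f x} = 2

/-- The dual of `X` has the weak* diameter 2 property if every nonempty relatively
weak* open subset of `B_{X*}` has diameter 2. -/
def WStarDiameterTwoProp (X : Type*) [NormedAddCommGroup X] [NormedSpace ℝ X] : Prop :=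
  ∀ U : Set (WeakDual ℝ X), IsOpen U →
    {f : X →L[ℝ] ℝ | ‖f‖ ≤ 1 ∧ StrongDual.toWeakDual f ∈ U}.Nonempty →
    Metric.diam {f : X →L[ℝ] ℝ | ‖f‖ ≤ 1 ∧ StrongDual.toWeakDual f ∈ U} = 2

/-- The dual of `X` has the weak* strong diameter 2 property if every convex
combination of weak* slices of `B_{X*}` has diameter 2. -/
def WStarStrongDiameterTwoProp (X : Type*) [NormedAddCommGroup X] [NormedSpace ℝ X] : Prop :=
  ∀ (n : ℕ) (lam : Fin n → ℝ) (x : Fin n → X) (α : Fin n → ℝ),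
    (∀ i, 0 ≤ lam i) → (∑ i, lam i) = 1 → (∀ i, ‖x i‖ = 1) → (∀ i, 0 < α i) →
    Metric.diam {f : X →L[ℝ] ℝ | ∃ g : Fin n → (X →L[ℝ] ℝ),
      (∀ i, ‖g i‖ ≤ 1 ∧ 1 - α i < g i (x i)) ∧ f = ∑ i, lam i • g i} = 2

/-- `X` is locally octahedral. -/
def LocallyOctahedral (X : Type*) [NormedAddCommGroup X] [NormedSpace ℝ X] : Prop :=
  ∀ x : X, ∀ ε : ℝ, 0 < ε → ∃ y : X, ‖y‖ = 1 ∧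
    ∀ s : ℝ, (1 - ε) * (|s| * ‖x‖ + ‖y‖) ≤ ‖s • x + y‖

/-- `X` is weakly octahedral. -/
def WeaklyOctahedral (X : Type*) [NormedAddCommGroup X] [NormedSpace ℝ X] : Prop :=
  ∀ E : Subspace ℝ X, FiniteDimensional ℝ E → ∀ f : X →L[ℝ] ℝ, ‖f‖ ≤ 1 →
    ∀ ε : ℝ, 0 < ε → ∃ y : X, ‖y‖ = 1 ∧
      ∀ x ∈ E, (1 - ε) * (|f x| + ‖y‖) ≤ ‖x + y‖

/-- The norm on `X` is octahedral. -/
def Octahedral (X : Type*) [NormedAddCommGroup X] [NormedSpace ℝ X] : Prop :=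
  ∀ E : Subspace ℝ X, FiniteDimensional ℝ E → ∀ ε : ℝ, 0 < ε →
    ∃ y : X, ‖y‖ = 1 ∧ ∀ x ∈ E, (1 - ε) * (‖x‖ + ‖y‖) ≤ ‖x + y‖



/-!
If `w = (u, v)` is an `ε`-witness of local octahedrality for `(x, 0)` in `X ⊕_p Y`, then testing
at `s = 1 / ‖x‖` gives `‖(x / ‖x‖ + u, v)‖_p ≥ 2 (1 - ε)`. For `p < ∞`, the convexity bound
`(1 + ‖u‖) ^ p ≤ 2 ^ (p - 1) (1 + ‖u‖ ^ p)` together with `‖u‖ ^ p + ‖v‖ ^ p = 1` then forces `v` to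
be small, so `‖s • x + u‖ ≥ ‖(s • x + u, v)‖_p - ‖v‖`; for `p = ∞` it forces `‖u‖` close to `1`,
and each `s` falls under one of the two terms of the maximum. Either way `u` is an approximate
witness for `x` in the unit ball of `X`, and normalising it costs only `1 - ‖u‖`.
-/

open WithLp

lemma abs_inv_norm_mul_norm {E : Type*} [NormedAddCommGroup E] {x : E} (hx : x ≠ 0) :
    |‖x‖⁻¹| * ‖x‖ = 1 := by
  rw [abs_inv, abs_norm, inv_mul_cancel₀ (norm_ne_zero_iff.mpr hx)]

lemma WithLp.prod_norm_rpow_eq_add {α β : Type*} [SeminormedAddCommGroup α]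
    [SeminormedAddCommGroup β] {p : ℝ≥0∞} (hp : 0 < p.toReal) (f : WithLp p (α × β)) :
    ‖f‖ ^ p.toReal = ‖f.fst‖ ^ p.toReal + ‖f.snd‖ ^ p.toReal := by
  rw [prod_norm_eq_add hp, one_div, Real.rpow_inv_rpow (by positivity) hp.ne']

section Normalize

variable {X : Type*} [NormedAddCommGroup X] [NormedSpace ℝ X]

lemma norm_inv_norm_smul_add_le (x u : X) : ‖‖x‖⁻¹ • x + u‖ ≤ 1 + ‖u‖ := by
  refine (norm_add_le _ _).trans (add_le_add_left ?_ _)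
  rw [norm_smul, norm_inv, norm_norm]
  exact inv_mul_le_one_of_le₀ le_rfl (norm_nonneg _)

lemma norm_add_le_norm_add_inv_norm_smul (v : X) {u : X} (hu : u ≠ 0) (hu1 : ‖u‖ ≤ 1) :
    ‖v + u‖ ≤ ‖v + ‖u‖⁻¹ • u‖ + (1 - ‖u‖) := by
  have hu0 : 0 < ‖u‖ := norm_pos_iff.mpr hu
  have hdist : ‖u - ‖u‖⁻¹ • u‖ = 1 - ‖u‖ := by
    have hinv : 1 ≤ ‖u‖⁻¹ := (one_le_inv₀ hu0).mpr hu1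
    rw [show u - ‖u‖⁻¹ • u = (1 - ‖u‖⁻¹) • u by rw [sub_smul, one_smul], norm_smul,
      Real.norm_eq_abs, abs_of_nonpos (by linarith), neg_sub, sub_mul, inv_mul_cancel₀ hu0.ne',
      one_mul]
  calc ‖v + u‖ = ‖(v + ‖u‖⁻¹ • u) + (u - ‖u‖⁻¹ • u)‖ := by abel_nf
    _ ≤ ‖v + ‖u‖⁻¹ • u‖ + ‖u - ‖u‖⁻¹ • u‖ := norm_add_le _ _
    _ = ‖v + ‖u‖⁻¹ • u‖ + (1 - ‖u‖) := by rw [hdist]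

theorem LocallyOctahedral.of_forall_exists_almost [Nontrivial X]
    (h : ∀ x : X, x ≠ 0 → ∀ ε : ℝ, 0 < ε → ε < 1 → ∃ u : X, ‖u‖ ≤ 1 ∧
      ∀ s : ℝ, (1 - ε) * (|s| * ‖x‖ + 1) ≤ ‖s • x + u‖ + ε) :
    LocallyOctahedral X := by
  intro x ε hε
  rcases eq_or_ne x 0 with rfl | hx
  · obtain ⟨y, hy⟩ := exists_norm_eq X zero_le_one
    exact ⟨y, hy, fun s => by simp [hy, hε.le]⟩
  set η := min ε 1 / 8 with hη
  have hη0 : 0 < η := by positivity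
  have hηε : 8 * η ≤ ε := by rw [hη]; linarith [min_le_left ε 1]
  have hη1 : 8 * η ≤ 1 := by rw [hη]; linarith [min_le_right ε 1]
  obtain ⟨u, hu1, hu⟩ := h x hx η hη0 (by linarith)
  have hu_large : 1 - 2 * η ≤ ‖u‖ := by linarith [show 1 ≤ ‖u‖ + η + η by simpa using hu 0]
  have hu0 : u ≠ 0 := norm_pos_iff.mp (by linarith)
  have hunit : ‖‖u‖⁻¹ • u‖ = 1 := by simp [norm_smul, hu0]
  refine ⟨‖u‖⁻¹ • u, hunit, fun s => ?_⟩
  have hnormalize := norm_add_le_norm_add_inv_norm_smul (s • x) hu0 hu1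
  have ha : 0 ≤ |s| * ‖x‖ := by positivity
  rw [hunit]
  nlinarith [hu s]

end Normalize

lemma rpow_le_of_one_add_rpow_add_rpow_ge {q t b δ : ℝ} (hq : 1 ≤ q) (ht : 0 ≤ t)
    (htb : t ^ q + b ^ q = 1) (hδ : δ ≤ 1) (H : (2 * (1 - δ)) ^ q ≤ (1 + t) ^ q + b ^ q) :
    (2 ^ (q - 1) - 1) * b ^ q ≤ 2 ^ q * q * δ := by
  have hbernoulli : 1 - q * δ ≤ (1 - δ) ^ q := by
    simpa [sub_eq_add_neg] using one_add_mul_self_le_rpow_one_add (s := -δ) (by linarith) hq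
  have hconvex : (1 + t) ^ q ≤ 2 ^ (q - 1) * (1 + t ^ q) := by
    lift t to NNReal using ht
    have := NNReal.rpow_add_le_mul_rpow_add_rpow 1 t hq
    rw [NNReal.one_rpow] at this
    exact_mod_cast this
  have htwo : (2 : ℝ) ^ q = 2 * 2 ^ (q - 1) := by
    rw [Real.rpow_sub_one two_ne_zero]; ring
  rw [Real.mul_rpow zero_le_two (by linarith)] at H
  rw [eq_sub_of_add_eq htb] at hconvex
  have := mul_le_mul_of_nonneg_left hbernoulli (by positivity : (0 : ℝ) ≤ 2 ^ q)
  linarith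

section Product

variable {X Y : Type*} [NormedAddCommGroup X] [NormedSpace ℝ X] [NormedAddCommGroup Y]
  [NormedSpace ℝ Y]

lemma LocallyOctahedral.exists_almost_fst_prod_top (h : LocallyOctahedral (WithLp ∞ (X × Y)))
    {x : X} (hx : x ≠ 0) {ε : ℝ} (hε0 : 0 < ε) (hε1 : ε < 1) :
    ∃ u : X, ‖u‖ ≤ 1 ∧ ∀ s : ℝ, (1 - ε) * (|s| * ‖x‖ + 1) ≤ ‖s • x + u‖ + ε := by
  obtain ⟨w, hw, H⟩ := h (toLp ∞ (x, 0)) (ε / 5) (by positivity)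
  rw [norm_toLp_fst, hw] at H
  have hnorm (s : ℝ) : ‖s • toLp ∞ (x, (0 : Y)) + w‖ = max ‖s • x + w.fst‖ ‖w.snd‖ := by
    simp [prod_norm_eq_sup]
  have hfst : ‖w.fst‖ ≤ 1 := hw ▸ norm_fst_le _ w
  have hsnd : ‖w.snd‖ ≤ 1 := hw ▸ norm_snd_le _ w
  have hfst_large : 1 - 2 * (ε / 5) ≤ ‖w.fst‖ := by
    have h1 := H ‖x‖⁻¹
    rw [hnorm, abs_inv_norm_mul_norm hx] at h1
    rcases le_max_iff.mp h1 with h1 | h1 <;>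
      linarith [norm_inv_norm_smul_add_le x w.fst]
  refine ⟨w.fst, hfst, fun s => ?_⟩
  have ha : 0 ≤ |s| * ‖x‖ := by positivity
  rcases le_max_iff.mp (hnorm s ▸ H s) with hs | hs
  · nlinarith
  -- here `(1 - ε / 5) * (|s| * ‖x‖ + 1) ≤ 1`, so `|s| * ‖x‖` is at most about `ε / 4`
  · have hlower : ‖w.fst‖ - |s| * ‖x‖ ≤ ‖s • x + w.fst‖ := by
      have := norm_sub_le (s • x + w.fst) (s • x)
      rw [add_sub_cancel_left, norm_smul, Real.norm_eq_abs] at this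
      linarith
    nlinarith

lemma norm_snd_rpow_le_of_almost_octahedral {p : ℝ≥0∞} [Fact (1 ≤ p)] (hp : 1 < p.toReal)
    {x : X} (hx : x ≠ 0) {w : WithLp p (X × Y)} (hw : ‖w‖ = 1) {δ : ℝ} (hδ : δ ≤ 1)
    (H : (1 - δ) * (|‖x‖⁻¹| * ‖x‖ + 1) ≤ ‖‖x‖⁻¹ • toLp p (x, (0 : Y)) + w‖) :
    (2 ^ (p.toReal - 1) - 1) * ‖w.snd‖ ^ p.toReal ≤ 2 ^ p.toReal * p.toReal * δ := by
  have hp0 : 0 < p.toReal := by linarith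
  refine rpow_le_of_one_add_rpow_add_rpow_ge hp.le (norm_nonneg w.fst) ?_ hδ ?_
  · rw [← prod_norm_rpow_eq_add hp0, hw, Real.one_rpow]
  rw [abs_inv_norm_mul_norm hx, one_add_one_eq_two, mul_comm] at H
  calc (2 * (1 - δ)) ^ p.toReal
      ≤ ‖‖x‖⁻¹ • toLp p (x, (0 : Y)) + w‖ ^ p.toReal :=
        Real.rpow_le_rpow (by linarith) H hp0.le
    _ = ‖‖x‖⁻¹ • x + w.fst‖ ^ p.toReal + ‖w.snd‖ ^ p.toReal := by
        simp [prod_norm_rpow_eq_add hp0]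
    _ ≤ (1 + ‖w.fst‖) ^ p.toReal + ‖w.snd‖ ^ p.toReal := by
        gcongr
        exact norm_inv_norm_smul_add_le x w.fst

lemma LocallyOctahedral.exists_almost_fst_prod_of_ne_top {p : ℝ≥0∞} [Fact (1 ≤ p)] (hp : 1 < p)
    (hp_top : p ≠ ∞) (h : LocallyOctahedral (WithLp p (X × Y))) {x : X} (hx : x ≠ 0) {ε : ℝ}
    (hε0 : 0 < ε) (hε1 : ε < 1) :
    ∃ u : X, ‖u‖ ≤ 1 ∧ ∀ s : ℝ, (1 - ε) * (|s| * ‖x‖ + 1) ≤ ‖s • x + u‖ + ε := by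
  have hq : 1 < p.toReal := by
    simpa using (ENNReal.toReal_lt_toReal ENNReal.one_ne_top hp_top).mpr hp
  set q := p.toReal
  have hq0 : 0 < q := by linarith
  have hP : 0 < 2 ^ (q - 1) - (1 : ℝ) := by
    linarith [Real.one_lt_rpow one_lt_two (by linarith : 0 < q - 1)]
  set C := 2 ^ q * q / (2 ^ (q - 1) - 1)
  have hC : 0 < C := by positivity
  set δ := min ε (ε ^ q / C)
  have hδ0 : 0 < δ := by positivity
  have hδε : δ ≤ ε := min_le_left _ _
  obtain ⟨w, hw, H⟩ := h (toLp p (x, 0)) δ hδ0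
  rw [norm_toLp_fst, hw] at H
  have hsnd : ‖w.snd‖ ≤ ε := by
    have hbq := norm_snd_rpow_le_of_almost_octahedral hq hx hw (hδε.trans hε1.le) (H ‖x‖⁻¹)
    have hδC : δ * C ≤ ε ^ q := (le_div_iff₀ hC).mp (min_le_right _ _)
    have hbε : ‖w.snd‖ ^ q ≤ ε ^ q :=
      calc ‖w.snd‖ ^ q ≤ δ * C := by rw [mul_div_assoc', le_div_iff₀ hP]; linarith
        _ ≤ ε ^ q := hδC
    exact (Real.rpow_le_rpow_iff (norm_nonneg _) hε0.le hq0).mp hbε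
  refine ⟨w.fst, (norm_fst_le _ w).trans hw.le, fun s => ?_⟩
  have htri : ‖s • toLp p (x, (0 : Y)) + w‖ ≤ ‖s • x + w.fst‖ + ‖w.snd‖ := by
    rw [prod_norm_eq_add hq0]
    simpa using Real.rpow_add_rpow_le_add (norm_nonneg (s • x + w.fst)) (norm_nonneg w.snd) hq.le
  have ha : 0 ≤ |s| * ‖x‖ := by positivity
  nlinarith [H s]

end Product

theorem stmt_14_general (X Y : Type*) [NormedAddCommGroup X] [NormedSpace ℝ X] [Nontrivial X]
    [NormedAddCommGroup Y] [NormedSpace ℝ Y]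
    (p : ℝ≥0∞) [Fact (1 ≤ p)] (hp : 1 < p)
    (h : LocallyOctahedral (WithLp p (X × Y))) :
    LocallyOctahedral X := by
  refine LocallyOctahedral.of_forall_exists_almost fun x hx ε hε0 hε1 => ?_
  rcases eq_or_ne p ∞ with rfl | hp_top
  · exact h.exists_almost_fst_prod_top hx hε0 hε1
  · exact h.exists_almost_fst_prod_of_ne_top hp hp_top hx hε0 hε1

theorem stmt_14 (X Y : Type*) [NormedAddCommGroup X] [NormedSpace ℝ X] [CompleteSpace X] [Nontrivial X]
    [NormedAddCommGroup Y] [NormedSpace ℝ Y] [CompleteSpace Y] [Nontrivial Y]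
    (p : ℝ≥0∞) [Fact (1 ≤ p)] (hp : 1 < p)
    (h : LocallyOctahedral (WithLp p (X × Y))) :
    LocallyOctahedral X :=
  stmt_14_general X Y p hp h
end
end

section
/- Let X and Y be nontrivial real Banach spaces. (a) If X is octahedral, then X ⊕₁ Y is octahedral. (b) If X and Y are both octahedral, then X ⊕_∞ Y is octahedral. (c) If X ⊕_∞ Y is octahedral, then X is octahedral. -/
open Metric Set

noncomputable section

/-! In (a) and (b) a witness for a subspace `E` of the sum is assembled from witnesses for the
coordinate projections of `E`: `(y, 0)` in the `ℓ₁`-sum and `(y₁, y₂)` in the `ℓ∞`-sum.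

For (c), fix a unit vector `e ∈ X` and a witness `z` in `X ⊕∞ Y`, with `δ = ε / 4`, for the image
of `E + ℝe` in the first factor. For `x ∈ E + ℝe` this gives
`(1 - δ) (‖x‖ + 1) ≤ max ‖x + z₁‖ 1`; at `x = e` it forces `‖z₁‖ ≥ 1 - 2δ`, so the unit vector
`z₁ / ‖z₁‖` is within `2δ` of `z₁` and is a witness for `E` with `4δ = ε`. -/

section Normed

variable {X : Type*} [NormedAddCommGroup X]

lemma le_norm_add_of_le_max_norm_add {x y z : X} {δ : ℝ} (hδ : 0 ≤ δ) (hy : ‖y‖ = 1)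
    (hyz : ‖y - z‖ ≤ 2 * δ) (hx : (1 - δ) * (‖x‖ + 1) ≤ max ‖x + z‖ 1) :
    (1 - 4 * δ) * (‖x‖ + ‖y‖) ≤ ‖x + y‖ := by
  have hδx : 0 ≤ δ * ‖x‖ := mul_nonneg hδ (norm_nonneg x)
  rw [hy]
  rcases max_choice ‖x + z‖ 1 with hmax | hmax <;> rw [hmax] at hx
  · have : ‖x + z‖ ≤ ‖x + y‖ + ‖y - z‖ := by
      simpa [norm_sub_rev y z] using norm_add_le (x + y) (z - y)
    nlinarith
  · have := norm_le_add_norm_add' x y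
    nlinarith

variable [NormedSpace ℝ X]

lemma Octahedral.of_forall_lt_one
    (h : ∀ E : Subspace ℝ X, FiniteDimensional ℝ E → ∀ ε : ℝ, 0 < ε → ε < 1 →
      ∃ y : X, ‖y‖ = 1 ∧ ∀ x ∈ E, (1 - ε) * (‖x‖ + ‖y‖) ≤ ‖x + y‖) :
    Octahedral X := by
  intro E hE ε hε
  obtain ⟨y, hy, hyE⟩ := h E hE (min ε 2⁻¹) (by positivity) (by norm_num)
  refine ⟨y, hy, fun x hx => le_trans ?_ (hyE x hx)⟩
  gcongr
  exact min_le_left ε 2⁻¹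

lemma norm_inv_norm_smul_sub_self {z : X} (hz : z ≠ 0) : ‖‖z‖⁻¹ • z - z‖ = |1 - ‖z‖| := by
  have hz' : ‖z‖ ≠ 0 := norm_ne_zero_iff.mpr hz
  have : ‖z‖⁻¹ • z - z = (‖z‖⁻¹ - 1) • z := by rw [sub_smul, one_smul]
  rw [this, norm_smul, Real.norm_eq_abs, ← abs_norm z, ← abs_mul, abs_norm, sub_one_mul,
    inv_mul_cancel₀ hz']

end Normed

namespace WithLp

lemma prod_norm_toLp_inl_add {X Y : Type*} [NormedAddCommGroup X] [NormedAddCommGroup Y]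
    (x : X) (z : WithLp ⊤ (X × Y)) : ‖toLp ⊤ (x, (0 : Y)) + z‖ = max ‖x + z.fst‖ ‖z.snd‖ := by
  simp [prod_norm_eq_sup]

end WithLp

section ProdLp

variable {X Y : Type*} [NormedAddCommGroup X] [NormedSpace ℝ X]
  [NormedAddCommGroup Y] [NormedSpace ℝ Y]

open WithLp

theorem Octahedral.withLp_one_prod (hX : Octahedral X) : Octahedral (WithLp 1 (X × Y)) := by
  intro E hE ε hε
  obtain ⟨y, hy, hyE⟩ := hX (E.map (fstₗ 1 ℝ X Y)) inferInstance ε hε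
  refine ⟨toLp 1 (y, 0), by simpa using hy, fun w hw => ?_⟩
  have hw₁ := hyE w.fst ⟨w, hw, rfl⟩
  simp only [prod_norm_eq_of_L1, add_fst, add_snd, toLp_fst, toLp_snd, add_zero, norm_zero]
  nlinarith [norm_nonneg w.snd]

theorem Octahedral.withLp_top_prod (hX : Octahedral X) (hY : Octahedral Y) :
    Octahedral (WithLp ⊤ (X × Y)) := by
  intro E hE ε hε
  obtain ⟨y₁, hy₁, hy₁E⟩ := hX (E.map (fstₗ ⊤ ℝ X Y)) inferInstance ε hε
  obtain ⟨y₂, hy₂, hy₂E⟩ := hY (E.map (sndₗ ⊤ ℝ X Y)) inferInstance ε hε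
  refine ⟨toLp ⊤ (y₁, y₂), by simp [prod_norm_eq_sup, hy₁, hy₂], fun w hw => ?_⟩
  have hw₁ := hy₁E w.fst ⟨w, hw, rfl⟩
  have hw₂ := hy₂E w.snd ⟨w, hw, rfl⟩
  simp only [prod_norm_eq_sup, add_fst, add_snd, toLp_fst, toLp_snd, hy₁, hy₂, max_self]
    at hw₁ hw₂ ⊢
  rcases max_choice ‖w.fst‖ ‖w.snd‖ with h | h <;> rw [h]
  · exact hw₁.trans (le_max_left _ _)
  · exact hw₂.trans (le_max_right _ _)

theorem Octahedral.of_withLp_top_prod [Nontrivial X] (hZ : Octahedral (WithLp ⊤ (X × Y))) :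
    Octahedral X := by
  refine Octahedral.of_forall_lt_one fun E hE ε hε hε1 => ?_
  obtain ⟨e, he⟩ := exists_norm_eq X zero_le_one
  obtain ⟨δ, hδ, rfl⟩ : ∃ δ, 0 < δ ∧ 4 * δ = ε := ⟨ε / 4, by positivity, by ring⟩
  let inl : X →ₗ[ℝ] WithLp ⊤ (X × Y) :=
    (WithLp.linearEquiv ⊤ ℝ (X × Y)).symm.toLinearMap ∘ₗ LinearMap.inl ℝ X Y
  obtain ⟨z, hz, hzE⟩ := hZ ((E ⊔ ℝ ∙ e).map inl) inferInstance δ hδ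
  have hz_le : ‖z.fst‖ ≤ 1 ∧ ‖z.snd‖ ≤ 1 := by simpa [prod_norm_eq_sup] using hz.le
  have hzE' : ∀ x ∈ E ⊔ ℝ ∙ e, (1 - δ) * (‖x‖ + 1) ≤ max ‖x + z.fst‖ 1 := by
    intro x hx
    have h := hzE (inl x) ⟨x, hx, rfl⟩
    change (1 - δ) * (‖toLp ⊤ (x, (0 : Y))‖ + ‖z‖) ≤ ‖toLp ⊤ (x, 0) + z‖ at h
    rw [norm_toLp_fst, hz, prod_norm_toLp_inl_add] at h
    exact h.trans (max_le_max le_rfl hz_le.2)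
  have hz₁ : 1 - 2 * δ ≤ ‖z.fst‖ := by
    have h := hzE' e (Submodule.mem_sup_right (Submodule.mem_span_singleton_self e))
    have := norm_add_le e z.fst
    rw [he] at h this
    rcases max_choice ‖e + z.fst‖ 1 with hmax | hmax <;> rw [hmax] at h <;>
      linarith [norm_nonneg z.fst]
  have hz₁_ne : z.fst ≠ 0 := norm_pos_iff.mp (by linarith)
  refine ⟨‖z.fst‖⁻¹ • z.fst, norm_smul_inv_norm hz₁_ne, fun x hx => ?_⟩
  have hyz : ‖‖z.fst‖⁻¹ • z.fst - z.fst‖ ≤ 2 * δ := by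
    rw [norm_inv_norm_smul_sub_self hz₁_ne, abs_of_nonneg (by linarith [hz_le.1])]
    linarith
  exact le_norm_add_of_le_max_norm_add hδ.le (norm_smul_inv_norm hz₁_ne) hyz
    (hzE' x (Submodule.mem_sup_left hx))

end ProdLp

theorem stmt_17_general (X Y : Type*) [NormedAddCommGroup X] [NormedSpace ℝ X] [Nontrivial X]
    [NormedAddCommGroup Y] [NormedSpace ℝ Y] :
    (Octahedral X → Octahedral (WithLp 1 (X × Y))) ∧
    (Octahedral X → Octahedral Y → Octahedral (WithLp ⊤ (X × Y))) ∧
    (Octahedral (WithLp ⊤ (X × Y)) → Octahedral X) :=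
  ⟨Octahedral.withLp_one_prod, Octahedral.withLp_top_prod, Octahedral.of_withLp_top_prod⟩

theorem stmt_17 (X Y : Type*) [NormedAddCommGroup X] [NormedSpace ℝ X] [CompleteSpace X] [Nontrivial X]
    [NormedAddCommGroup Y] [NormedSpace ℝ Y] [CompleteSpace Y] [Nontrivial Y] :
    (Octahedral X → Octahedral (WithLp 1 (X × Y))) ∧
    (Octahedral X → Octahedral Y → Octahedral (WithLp ⊤ (X × Y))) ∧
    (Octahedral (WithLp ⊤ (X × Y)) → Octahedral X) :=
  stmt_17_general X Y
end
end

section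
/- Let X be a nontrivial real Banach space and let Y be a proper closed subspace of X that is a strict M-ideal in X. Then both Y and X have the strong diameter 2 property. -/
/-!
Since `Y` is a proper closed subspace there is a norm-one `ϕ ∈ Y^⊥`, and the M-decomposition
gives `‖g ± ϕ‖ = ‖g‖ + 1` for every `g` in the range of `P`. So every family of slices given by
such `g`'s contains points `v i`, `v' i` with `ϕ (v i - v' i)` close to `2`; their convex
combination `w` has norm close to `2`, and since the range of `P` is norming some `Ψ` in it
nearly attains `‖w‖`. Restriction to `Y` is isometric on the range of `P`, so `B_Y` is weak*-dense
in `B_X` as far as these functionals can see, and the points can be moved into `B_Y` keeping both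
their slices and the values of `Ψ`. This gives the strong diameter 2 property of `Y`, whose slices
are slices of `P` applied to Hahn–Banach extensions. For `X`, the points `P* y + (1 - P*) u` of the
bidual lie in the weak*-closure of `B_X`; with `u` in the slice of `f` they move the points of
`B_Y` back into the slices of `f` in `B_X`, again without changing `Ψ` much.
-/

open Metric Set

noncomputable section

section GeneralFacts

variable {E : Type*} [NormedAddCommGroup E] [NormedSpace ℝ E]

theorem ContinuousLinearMap.apply_le_norm (f : E →L[ℝ] ℝ) {x : E} (hx : ‖x‖ ≤ 1) : f x ≤ ‖f‖ :=
  (le_abs_self _).trans <| (f.le_opNorm_of_le hx).trans_eq (mul_one _)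

theorem ContinuousLinearMap.apply_le_norm_of_norm_le_one (f : E →L[ℝ] ℝ) (hf : ‖f‖ ≤ 1) (x : E) :
    f x ≤ ‖x‖ :=
  (le_abs_self _).trans <| (f.le_opNorm x).trans (mul_le_of_le_one_left (norm_nonneg x) hf)

theorem ContinuousLinearMap.exists_norm_le_one_lt_apply (f : E →L[ℝ] ℝ) {r : ℝ} (hr : r < ‖f‖) :
    ∃ x : E, ‖x‖ ≤ 1 ∧ r < f x := by
  obtain ⟨x, hx, hrx⟩ := f.exists_lt_apply_of_lt_opNorm hr
  rcases le_or_gt 0 (f x) with h | h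
  · exact ⟨x, hx.le, by rwa [Real.norm_of_nonneg h] at hrx⟩
  · exact ⟨-x, by simpa using hx.le, by rwa [map_neg, ← Real.norm_of_nonpos h.le]⟩

theorem ContinuousLinearMap.exists_apply_gt_of_norm_add_eq {f g : E →L[ℝ] ℝ}
    (h : ‖f + g‖ = ‖f‖ + ‖g‖) {δ : ℝ} (hδ : 0 < δ) :
    ∃ x : E, ‖x‖ ≤ 1 ∧ ‖f‖ - δ < f x ∧ ‖g‖ - δ < g x := by
  obtain ⟨x, hx, hfgx⟩ := (f + g).exists_norm_le_one_lt_apply (r := ‖f‖ + ‖g‖ - δ) (by linarith)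
  have hf := f.apply_le_norm hx
  have hg := g.apply_le_norm hx
  rw [add_apply] at hfgx
  exact ⟨x, hx, by linarith, by linarith⟩

theorem Submodule.exists_norm_eq_one_forall_apply_eq_zero {Y : Subspace ℝ E}
    (hYc : IsClosed (Y : Set E)) (hY : Y ≠ ⊤) :
    ∃ ϕ : E →L[ℝ] ℝ, ‖ϕ‖ = 1 ∧ ∀ y ∈ Y, ϕ y = 0 := by
  obtain ⟨x, hx⟩ : ∃ x, x ∉ Y := by
    by_contra! h
    exact hY (Submodule.eq_top_iff'.mpr h)
  obtain ⟨f, u, hfY, hux⟩ := geometric_hahn_banach_closed_point Y.convex hYc hx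
  -- a functional bounded above on a subspace vanishes on it
  have hf : ∀ y ∈ Y, f y = 0 := by
    intro y hy
    by_contra hfy
    have := hfY (((|u| + 1) / f y) • y) (Y.smul_mem _ hy)
    rw [map_smul, smul_eq_mul, div_mul_cancel₀ _ hfy] at this
    linarith [le_abs_self u]
  have hf0 : f ≠ 0 := by
    rintro rfl
    simp only [zero_apply] at hfY hux
    linarith [hfY 0 Y.zero_mem]
  refine ⟨‖f‖⁻¹ • f, ?_, fun y hy => by simp [hf y hy]⟩
  rw [norm_smul, norm_inv, norm_norm, inv_mul_cancel₀ (norm_ne_zero_iff.mpr hf0)]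

end GeneralFacts

theorem Convex.mem_closure_of_forall_exists_lt {F : Type*} [TopologicalSpace F] [AddCommGroup F]
    [Module ℝ F] [IsTopologicalAddGroup F] [ContinuousSMul ℝ F] [LocallyConvexSpace ℝ F]
    {C : Set F} (hC : Convex ℝ C) {p : F}
    (h : ∀ φ : F →L[ℝ] ℝ, ∀ r < φ p, ∃ c ∈ C, r < φ c) : p ∈ closure C := by
  by_contra hp
  obtain ⟨φ, u, hφC, huφ⟩ := geometric_hahn_banach_closed_point hC.closure isClosed_closure hp
  obtain ⟨c, hc, huc⟩ := h φ u huφ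
  exact lt_asymm huc (hφC c (subset_closure hc))

theorem ContinuousLinearMap.apply_prod_eq (φ : ℝ × ℝ →L[ℝ] ℝ) (a b : ℝ) :
    φ (a, b) = a * φ (1, 0) + b * φ (0, 1) := by
  rw [← smul_eq_mul, ← smul_eq_mul, ← map_smul, ← map_smul, ← map_add]
  simp

/-- Goldstine-type approximation: `Λ` behaves like an element of the bidual in the
weak*-closure of `s`. -/
theorem Convex.exists_abs_apply_sub_lt {E : Type*} [TopologicalSpace E] [AddCommGroup E]
    [Module ℝ E] {s : Set E} (hs : Convex ℝ s) (Λ : (E →L[ℝ] ℝ) →ₗ[ℝ] ℝ)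
    (hΛ : ∀ χ, ∀ r < Λ χ, ∃ x ∈ s, r < χ x) (χ₁ χ₂ : E →L[ℝ] ℝ) {δ : ℝ} (hδ : 0 < δ) :
    ∃ x ∈ s, |χ₁ x - Λ χ₁| < δ ∧ |χ₂ x - Λ χ₂| < δ := by
  let T : E →ₗ[ℝ] ℝ × ℝ := (χ₁ : E →ₗ[ℝ] ℝ).prod χ₂
  have hp : (Λ χ₁, Λ χ₂) ∈ closure (T '' s) := by
    refine (hs.linear_image T).mem_closure_of_forall_exists_lt fun φ r hr => ?_
    have hΛφ : Λ (φ (1, 0) • χ₁ + φ (0, 1) • χ₂) = φ (Λ χ₁, Λ χ₂) := by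
      rw [φ.apply_prod_eq (Λ χ₁), map_add, map_smul, map_smul, smul_eq_mul, smul_eq_mul]
      ring
    obtain ⟨x, hx, hrx⟩ := hΛ _ r (hΛφ ▸ hr)
    refine ⟨T x, mem_image_of_mem T hx, ?_⟩
    rw [show T x = (χ₁ x, χ₂ x) from rfl, φ.apply_prod_eq (χ₁ x)]
    rw [add_apply, smul_apply, smul_apply, smul_eq_mul, smul_eq_mul] at hrx
    linarith
  obtain ⟨_, ⟨x, hx, rfl⟩, hdist⟩ := Metric.mem_closure_iff.mp hp δ hδ
  rw [Prod.dist_eq, max_lt_iff, Real.dist_eq, Real.dist_eq, abs_sub_comm, abs_sub_comm (Λ χ₂)]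
    at hdist
  exact ⟨x, hx, hdist⟩

section WeightedSums

variable {ι : Type*} [Fintype ι] {w : ι → ℝ}

theorem sub_le_sum_mul_of_forall (hw : ∀ i, 0 ≤ w i) (hw1 : ∑ i, w i = 1) {a b : ι → ℝ} {c : ℝ}
    (h : ∀ i, b i - c ≤ a i) : ∑ i, w i * b i - c ≤ ∑ i, w i * a i :=
  calc ∑ i, w i * b i - c = ∑ i, w i * (b i - c) := by
        simp only [mul_sub, Finset.sum_sub_distrib, ← Finset.sum_mul, hw1, one_mul]
    _ ≤ ∑ i, w i * a i := Finset.sum_le_sum fun i _ => mul_le_mul_of_nonneg_left (h i) (hw i)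

variable {E : Type*} [NormedAddCommGroup E] [NormedSpace ℝ E]

theorem ContinuousLinearMap.apply_sum_smul_sub (Ψ : E →L[ℝ] ℝ) (w : ι → ℝ) (a b : ι → E) :
    Ψ (∑ i, w i • a i - ∑ i, w i • b i) = ∑ i, w i * (Ψ (a i) - Ψ (b i)) := by
  simp [map_sum, mul_sub, Finset.sum_sub_distrib]

theorem ContinuousLinearMap.sub_le_apply_sum_smul_sub (Ψ : E →L[ℝ] ℝ) (hw : ∀ i, 0 ≤ w i)
    (hw1 : ∑ i, w i = 1) {a b a' b' : ι → E} {δ : ℝ} (ha : ∀ i, |Ψ (a i) - Ψ (a' i)| < δ)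
    (hb : ∀ i, |Ψ (b i) - Ψ (b' i)| < δ) :
    Ψ (∑ i, w i • a' i - ∑ i, w i • b' i) - 2 * δ ≤ Ψ (∑ i, w i • a i - ∑ i, w i • b i) := by
  rw [Ψ.apply_sum_smul_sub, Ψ.apply_sum_smul_sub]
  refine sub_le_sum_mul_of_forall hw hw1 fun i => ?_
  linarith [abs_lt.mp (ha i), abs_lt.mp (hb i)]

end WeightedSums

theorem diam_eq_two_of_subset_closedBall {E : Type*} [SeminormedAddCommGroup E] {S : Set E}
    (hS : S ⊆ closedBall 0 1) (h : ∀ ε > 0, ∃ p ∈ S, ∃ q ∈ S, 2 - ε < ‖p - q‖) : diam S = 2 := by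
  refine le_antisymm ((diam_mono hS isBounded_closedBall).trans
    ((diam_closedBall zero_le_one).trans_eq (mul_one 2))) (le_of_forall_pos_le_add fun ε hε => ?_)
  obtain ⟨p, hp, q, hq, hpq⟩ := h ε hε
  have := dist_le_diam_of_mem (isBounded_closedBall.subset hS) hp hq
  rw [dist_eq_norm] at this
  linarith

theorem strongDiameterTwoProp_of_forall_exists {E : Type*} [NormedAddCommGroup E] [NormedSpace ℝ E]
    (H : ∀ (n : ℕ) (lam : Fin n → ℝ) (f : Fin n → E →L[ℝ] ℝ), (∀ i, 0 ≤ lam i) →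
      ∑ i, lam i = 1 → (∀ i, ‖f i‖ = 1) → ∀ δ > 0, ∃ g h : Fin n → E,
        (∀ i, ‖g i‖ ≤ 1 ∧ 1 - δ < f i (g i)) ∧ (∀ i, ‖h i‖ ≤ 1 ∧ 1 - δ < f i (h i)) ∧
        2 - δ < ‖∑ i, lam i • g i - ∑ i, lam i • h i‖) :
    StrongDiameterTwoProp E := by
  intro n lam f α hlam hsum hf hα
  refine diam_eq_two_of_subset_closedBall ?_ fun ε hε => ?_
  · rintro _ ⟨g, hg, rfl⟩
    exact (convex_closedBall 0 1).sum_mem (fun i _ => hlam i) hsum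
      fun i _ => mem_closedBall_zero_iff.2 (hg i).1
  obtain ⟨δ, ⟨hδε, hδα⟩, hδ⟩ : ∃ δ, (δ ≤ ε ∧ ∀ i, δ ≤ α i) ∧ 0 < δ :=
    ((((eventually_le_nhds hε).and (Filter.eventually_all.2 fun i => eventually_le_nhds (hα i))
      ).filter_mono nhdsWithin_le_nhds).and
      (self_mem_nhdsWithin : Ioi (0 : ℝ) ∈ nhdsWithin 0 (Ioi 0))).exists
  obtain ⟨g, h, hg, hh, hgh⟩ := H n lam f hlam hsum hf δ hδ
  exact ⟨_, ⟨g, fun i => ⟨(hg i).1, by linarith [(hg i).2, hδα i]⟩, rfl⟩,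
    _, ⟨h, fun i => ⟨(hh i).1, by linarith [(hh i).2, hδα i]⟩, rfl⟩, by linarith⟩

structure IsMIdealProjection {X : Type*} [NormedAddCommGroup X] [NormedSpace ℝ X]
    (Y : Subspace ℝ X) (P : StrongDual ℝ X →L[ℝ] StrongDual ℝ X) : Prop where
  map_map : ∀ f, P (P f) = P f
  map_eq_zero_iff : ∀ f, P f = 0 ↔ ∀ y ∈ Y, f y = 0
  norm_eq_add : ∀ f, ‖f‖ = ‖P f‖ + ‖f - P f‖

namespace IsMIdealProjection

variable {X : Type*} [NormedAddCommGroup X] [NormedSpace ℝ X] {Y : Subspace ℝ X}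
  {P : StrongDual ℝ X →L[ℝ] StrongDual ℝ X}

theorem map_eq_map_of_eqOn (hP : IsMIdealProjection Y P) {f g : StrongDual ℝ X}
    (h : ∀ y ∈ Y, f y = g y) : P f = P g := by
  rw [← sub_eq_zero, ← map_sub, hP.map_eq_zero_iff]
  intro y hy
  rw [sub_apply, h y hy, sub_self]

theorem map_apply_of_mem (hP : IsMIdealProjection Y P) (f : StrongDual ℝ X) {y : X}
    (hy : y ∈ Y) : P f y = f y := by
  have := (hP.map_eq_zero_iff (f - P f)).1 (by rw [map_sub, hP.map_map, sub_self]) y hy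
  rw [sub_apply] at this
  linarith

/-- `P f` is the norm-preserving extension of `f|_Y`. -/
theorem norm_map (hP : IsMIdealProjection Y P) (f : StrongDual ℝ X) :
    ‖P f‖ = ‖f.comp Y.subtypeL‖ := by
  obtain ⟨F, hF, hFnorm⟩ := exists_extension_norm_eq Y (f.comp Y.subtypeL)
  have hPF : P F = P f := hP.map_eq_map_of_eqOn fun y hy => hF ⟨y, hy⟩
  refine le_antisymm ?_ ?_
  · calc ‖P f‖ = ‖P F‖ := by rw [hPF]
      _ ≤ ‖F‖ := by rw [hP.norm_eq_add F]; exact le_add_of_nonneg_right (norm_nonneg _)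
      _ = ‖f.comp Y.subtypeL‖ := hFnorm
  · refine ContinuousLinearMap.opNorm_le_bound _ (norm_nonneg _) fun y => ?_
    rw [ContinuousLinearMap.comp_apply, Submodule.subtypeL_apply, ← hP.map_apply_of_mem f y.2]
    exact (P f).le_opNorm y

theorem exists_mem_lt_apply (hP : IsMIdealProjection Y P) (f : StrongDual ℝ X) {r : ℝ}
    (hr : r < ‖P f‖) : ∃ y ∈ Y, ‖y‖ ≤ 1 ∧ r < f y := by
  rw [hP.norm_map] at hr
  obtain ⟨y, hy, hry⟩ := (f.comp Y.subtypeL).exists_norm_le_one_lt_apply hr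
  exact ⟨y, y.2, hy, hry⟩

theorem norm_add_of_map_eq_zero (hP : IsMIdealProjection Y P) {g ϕ : StrongDual ℝ X}
    (hg : P g = g) (hϕ : P ϕ = 0) : ‖g + ϕ‖ = ‖g‖ + ‖ϕ‖ := by
  rw [hP.norm_eq_add, map_add, hg, hϕ, add_zero, add_sub_cancel_left]

theorem exists_mem_abs_apply_sub_lt (hP : IsMIdealProjection Y P) (χ₁ χ₂ : StrongDual ℝ X)
    {u : X} (hu : ‖u‖ ≤ 1) {δ : ℝ} (hδ : 0 < δ) :
    ∃ y ∈ Y, ‖y‖ ≤ 1 ∧ |χ₁ y - P χ₁ u| < δ ∧ |χ₂ y - P χ₂ u| < δ := by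
  have hΛ : ∀ χ, ∀ r < P χ u, ∃ y ∈ (Y : Set X) ∩ closedBall 0 1, r < χ y := by
    intro χ r hr
    obtain ⟨y, hyY, hy, hry⟩ := hP.exists_mem_lt_apply χ (hr.trans_le ((P χ).apply_le_norm hu))
    exact ⟨y, ⟨hyY, mem_closedBall_zero_iff.2 hy⟩, hry⟩
  obtain ⟨y, ⟨hyY, hy⟩, h⟩ := (Y.convex.inter (convex_closedBall 0 1)).exists_abs_apply_sub_lt
    ((ContinuousLinearMap.apply ℝ ℝ u).comp P : StrongDual ℝ X →L[ℝ] ℝ) hΛ χ₁ χ₂ hδ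
  exact ⟨y, hyY, mem_closedBall_zero_iff.1 hy, h⟩

/-- The point `P* y + (1 - P*) u` of the bidual lies in the weak*-closure of `B_X`. -/
theorem exists_norm_le_one_abs_apply_sub_lt (hP : IsMIdealProjection Y P)
    (χ₁ χ₂ : StrongDual ℝ X) {y u : X} (hy : ‖y‖ ≤ 1) (hu : ‖u‖ ≤ 1) {δ : ℝ} (hδ : 0 < δ) :
    ∃ x : X, ‖x‖ ≤ 1 ∧ |χ₁ x - (P χ₁ y + (χ₁ - P χ₁) u)| < δ ∧
      |χ₂ x - (P χ₂ y + (χ₂ - P χ₂) u)| < δ := by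
  have hΛ : ∀ χ, ∀ r < P χ y + (χ - P χ) u, ∃ x ∈ closedBall (0 : X) 1, r < χ x := by
    intro χ r hr
    have hχ : P χ y + (χ - P χ) u ≤ ‖χ‖ := by
      rw [hP.norm_eq_add χ]
      exact add_le_add ((P χ).apply_le_norm hy) ((χ - P χ).apply_le_norm hu)
    obtain ⟨x, hx, hrx⟩ := χ.exists_norm_le_one_lt_apply (hr.trans_le hχ)
    exact ⟨x, mem_closedBall_zero_iff.2 hx, hrx⟩
  obtain ⟨x, hx, h⟩ := (convex_closedBall (0 : X) 1).exists_abs_apply_sub_lt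
    ((ContinuousLinearMap.apply ℝ ℝ y).comp P +
      (ContinuousLinearMap.apply ℝ ℝ u).comp (ContinuousLinearMap.id ℝ _ - P) :
        StrongDual ℝ X →L[ℝ] ℝ) hΛ χ₁ χ₂ hδ
  exact ⟨x, mem_closedBall_zero_iff.1 hx, h⟩

theorem exists_norming_lt_apply (hP : IsMIdealProjection Y P)
    (hnorming : ∀ x : X, ‖x‖ = sSup {r : ℝ | ∃ f ∈ Set.range P, ‖f‖ ≤ 1 ∧ r = |f x|})
    (x : X) {r : ℝ} (hr : r < ‖x‖) : ∃ Ψ : StrongDual ℝ X, P Ψ = Ψ ∧ ‖Ψ‖ ≤ 1 ∧ r < Ψ x := by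
  have hne : {r : ℝ | ∃ f ∈ Set.range P, ‖f‖ ≤ 1 ∧ r = |f x|}.Nonempty :=
    ⟨0, 0, ⟨0, map_zero P⟩, by simp, by simp⟩
  rw [hnorming x] at hr
  obtain ⟨_, ⟨Ψ, ⟨F, rfl⟩, hΨ, rfl⟩, hrΨ⟩ := exists_lt_of_lt_csSup hne hr
  rcases le_or_gt 0 (P F x) with h | h
  · exact ⟨P F, hP.map_map F, hΨ, by rwa [abs_of_nonneg h] at hrΨ⟩
  · refine ⟨-P F, by rw [map_neg, hP.map_map], by rwa [norm_neg], ?_⟩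
    rwa [neg_apply, ← abs_of_neg h]

section Slices

variable {ι : Type*} [Fintype ι] {w : ι → ℝ}

theorem exists_slice_points_two_sub_le_norm (hP : IsMIdealProjection Y P)
    (hYc : IsClosed (Y : Set X)) (hY : Y ≠ ⊤) (hw : ∀ i, 0 ≤ w i) (hw1 : ∑ i, w i = 1)
    {G : ι → StrongDual ℝ X} (hG : ∀ i, P (G i) = G i) {δ : ℝ} (hδ : 0 < δ) :
    ∃ v v' : ι → X, (∀ i, ‖v i‖ ≤ 1 ∧ ‖G i‖ - δ < G i (v i)) ∧
      (∀ i, ‖v' i‖ ≤ 1 ∧ ‖G i‖ - δ < G i (v' i)) ∧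
      2 - 2 * δ ≤ ‖∑ i, w i • v i - ∑ i, w i • v' i‖ := by
  obtain ⟨ϕ, hϕ1, hϕY⟩ := Y.exists_norm_eq_one_forall_apply_eq_zero hYc hY
  have hPϕ : P ϕ = 0 := (hP.map_eq_zero_iff ϕ).2 hϕY
  have hPϕ' : P (-ϕ) = 0 := by rw [map_neg, hPϕ, neg_zero]
  choose v hv using fun i =>
    ContinuousLinearMap.exists_apply_gt_of_norm_add_eq (hP.norm_add_of_map_eq_zero (hG i) hPϕ) hδ
  choose v' hv' using fun i =>
    ContinuousLinearMap.exists_apply_gt_of_norm_add_eq (hP.norm_add_of_map_eq_zero (hG i) hPϕ') hδ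
  refine ⟨v, v', fun i => ⟨(hv i).1, (hv i).2.1⟩, fun i => ⟨(hv' i).1, (hv' i).2.1⟩, ?_⟩
  have hϕvv' : ∀ i, 2 - 2 * δ ≤ ϕ (v i) - ϕ (v' i) := fun i => by
    have h := (hv i).2.2
    have h' := (hv' i).2.2
    rw [hϕ1] at h
    rw [norm_neg, hϕ1, neg_apply] at h'
    linarith
  calc 2 - 2 * δ ≤ ϕ (∑ i, w i • v i - ∑ i, w i • v' i) := by
        have := sub_le_sum_mul_of_forall hw hw1 (b := fun _ => 2) (c := 2 * δ) hϕvv'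
        rwa [← Finset.sum_mul, hw1, one_mul, ← ϕ.apply_sum_smul_sub] at this
    _ ≤ ‖∑ i, w i • v i - ∑ i, w i • v' i‖ := ϕ.apply_le_norm_of_norm_le_one hϕ1.le _

theorem exists_slice_points_mem_two_sub_lt_apply (hP : IsMIdealProjection Y P)
    (hnorming : ∀ x : X, ‖x‖ = sSup {r : ℝ | ∃ f ∈ Set.range P, ‖f‖ ≤ 1 ∧ r = |f x|})
    (hYc : IsClosed (Y : Set X)) (hY : Y ≠ ⊤) (hw : ∀ i, 0 ≤ w i) (hw1 : ∑ i, w i = 1)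
    {G : ι → StrongDual ℝ X} (hG : ∀ i, P (G i) = G i) {δ : ℝ} (hδ : 0 < δ) :
    ∃ (y z : ι → X) (Ψ : StrongDual ℝ X), P Ψ = Ψ ∧ ‖Ψ‖ ≤ 1 ∧
      (∀ i, y i ∈ Y ∧ ‖y i‖ ≤ 1 ∧ ‖G i‖ - δ < G i (y i)) ∧
      (∀ i, z i ∈ Y ∧ ‖z i‖ ≤ 1 ∧ ‖G i‖ - δ < G i (z i)) ∧
      2 - δ < Ψ (∑ i, w i • y i - ∑ i, w i • z i) := by
  have hδ5 : 0 < δ / 5 := by positivity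
  obtain ⟨v, v', hv, hv', hvv'⟩ := exists_slice_points_two_sub_le_norm hP hYc hY hw hw1 hG hδ5
  obtain ⟨Ψ, hPΨ, hΨ1, hΨv⟩ :=
    hP.exists_norming_lt_apply hnorming (∑ i, w i • v i - ∑ i, w i • v' i)
      (r := 2 - 3 * (δ / 5)) (by linarith)
  choose y hyY hy hyG hyΨ using fun i => hP.exists_mem_abs_apply_sub_lt (G i) Ψ (hv i).1 hδ5
  choose z hzY hz hzG hzΨ using fun i => hP.exists_mem_abs_apply_sub_lt (G i) Ψ (hv' i).1 hδ5
  simp only [hG, hPΨ] at hyG hyΨ hzG hzΨ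
  refine ⟨y, z, Ψ, hPΨ, hΨ1, fun i => ⟨hyY i, hy i, ?_⟩, fun i => ⟨hzY i, hz i, ?_⟩, ?_⟩
  · linarith [(abs_lt.1 (hyG i)).1, (hv i).2]
  · linarith [(abs_lt.1 (hzG i)).1, (hv' i).2]
  · linarith [Ψ.sub_le_apply_sum_smul_sub hw hw1 hyΨ hzΨ]

end Slices

theorem strongDiameterTwoProp_subspace (hP : IsMIdealProjection Y P)
    (hnorming : ∀ x : X, ‖x‖ = sSup {r : ℝ | ∃ f ∈ Set.range P, ‖f‖ ≤ 1 ∧ r = |f x|})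
    (hYc : IsClosed (Y : Set X)) (hY : Y ≠ ⊤) : StrongDiameterTwoProp Y := by
  refine strongDiameterTwoProp_of_forall_exists fun n lam f hlam hsum hf δ hδ => ?_
  choose F hF using fun i => exists_extension_norm_eq Y (f i)
  have hGf : ∀ i (y : Y), P (F i) y = f i y := fun i y =>
    (hP.map_apply_of_mem _ y.2).trans ((hF i).1 y)
  have hG : ∀ i, ‖P (F i)‖ = 1 := fun i => by
    rw [hP.norm_map, ← hf i]
    congr 1
    ext y
    exact (hF i).1 y
  obtain ⟨y, z, Ψ, -, hΨ1, hy, hz, hyz⟩ := exists_slice_points_mem_two_sub_lt_apply hP hnorming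
    hYc hY hlam hsum (G := fun i => P (F i)) (fun i => hP.map_map _) hδ
  refine ⟨fun i => ⟨y i, (hy i).1⟩, fun i => ⟨z i, (hz i).1⟩,
    fun i => ⟨(hy i).2.1, ?_⟩, fun i => ⟨(hz i).2.1, ?_⟩, ?_⟩
  · beta_reduce
    linarith [hGf i ⟨y i, (hy i).1⟩, (hy i).2.2, hG i]
  · beta_reduce
    linarith [hGf i ⟨z i, (hz i).1⟩, (hz i).2.2, hG i]
  · rw [Submodule.coe_norm]
    push_cast
    exact hyz.trans_le (Ψ.apply_le_norm_of_norm_le_one hΨ1 _)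

theorem exists_slice_point_near (hP : IsMIdealProjection Y P) {f Ψ : StrongDual ℝ X}
    (hf : ‖f‖ = 1) (hΨ : P Ψ = Ψ) {y : X} (hy : ‖y‖ ≤ 1) {δ : ℝ} (hfy : ‖P f‖ - δ < P f y)
    (hδ : 0 < δ) : ∃ x : X, ‖x‖ ≤ 1 ∧ 1 - 3 * δ < f x ∧ |Ψ x - Ψ y| < δ := by
  obtain ⟨u, hu, hfu⟩ := f.exists_norm_le_one_lt_apply (r := 1 - δ) (by linarith)
  obtain ⟨x, hx, hfx, hΨx⟩ := hP.exists_norm_le_one_abs_apply_sub_lt f Ψ hy hu hδ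
  rw [hΨ, sub_self, zero_apply, add_zero] at hΨx
  refine ⟨x, hx, ?_, hΨx⟩
  have hPfu := (P f).apply_le_norm hu
  have hM := hP.norm_eq_add f
  rw [sub_apply] at hfx
  linarith [(abs_lt.1 hfx).1]

theorem strongDiameterTwoProp (hP : IsMIdealProjection Y P)
    (hnorming : ∀ x : X, ‖x‖ = sSup {r : ℝ | ∃ f ∈ Set.range P, ‖f‖ ≤ 1 ∧ r = |f x|})
    (hYc : IsClosed (Y : Set X)) (hY : Y ≠ ⊤) : StrongDiameterTwoProp X := by
  refine strongDiameterTwoProp_of_forall_exists fun n lam f hlam hsum hf δ hδ => ?_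
  have hδ3 : 0 < δ / 3 := by positivity
  obtain ⟨y, z, Ψ, hPΨ, hΨ1, hy, hz, hyz⟩ := exists_slice_points_mem_two_sub_lt_apply hP hnorming
    hYc hY hlam hsum (G := fun i => P (f i)) (fun i => hP.map_map _) hδ3
  choose a ha using fun i => hP.exists_slice_point_near (hf i) hPΨ (hy i).2.1 (hy i).2.2 hδ3
  choose b hb using fun i => hP.exists_slice_point_near (hf i) hPΨ (hz i).2.1 (hz i).2.2 hδ3
  refine ⟨a, b, fun i => ⟨(ha i).1, by linarith [(ha i).2.1]⟩,
    fun i => ⟨(hb i).1, by linarith [(hb i).2.1]⟩, ?_⟩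
  linarith [Ψ.sub_le_apply_sum_smul_sub hlam hsum (fun i => (ha i).2.2) fun i => (hb i).2.2,
    Ψ.apply_le_norm_of_norm_le_one hΨ1 (∑ i, lam i • a i - ∑ i, lam i • b i)]

end IsMIdealProjection

theorem stmt_19_general (X : Type*) [NormedAddCommGroup X] [NormedSpace ℝ X]
    (Y : Subspace ℝ X) (hYc : IsClosed (Y : Set X))
    (P : StrongDual ℝ X →L[ℝ] StrongDual ℝ X)
    (hproj : ∀ f, P (P f) = P f)
    (hker : ∀ f : StrongDual ℝ X, P f = 0 ↔ ∀ y ∈ Y, f y = 0)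
    (hM : ∀ f : StrongDual ℝ X, ‖f‖ = ‖P f‖ + ‖f - P f‖)
    (hproper : Y ≠ ⊤)
    (hnorming : ∀ x : X,
      ‖x‖ = sSup {r : ℝ | ∃ f ∈ Set.range P, ‖f‖ ≤ 1 ∧ r = |f x|}) :
    StrongDiameterTwoProp Y ∧ StrongDiameterTwoProp X :=
  have hP : IsMIdealProjection Y P := ⟨hproj, hker, hM⟩
  ⟨hP.strongDiameterTwoProp_subspace hnorming hYc hproper,
    hP.strongDiameterTwoProp hnorming hYc hproper⟩

theorem stmt_19 (X : Type*) [NormedAddCommGroup X] [NormedSpace ℝ X] [CompleteSpace X] [Nontrivial X]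
    (Y : Subspace ℝ X) (hYc : IsClosed (Y : Set X))
    (P : StrongDual ℝ X →L[ℝ] StrongDual ℝ X)
    (hproj : ∀ f, P (P f) = P f)
    (hker : ∀ f : StrongDual ℝ X, P f = 0 ↔ ∀ y ∈ Y, f y = 0)
    (hM : ∀ f : StrongDual ℝ X, ‖f‖ = ‖P f‖ + ‖f - P f‖)
    (hproper : Y ≠ ⊤)
    (hnorming : ∀ x : X,
      ‖x‖ = sSup {r : ℝ | ∃ f ∈ Set.range P, ‖f‖ ≤ 1 ∧ r = |f x|}) :
    StrongDiameterTwoProp Y ∧ StrongDiameterTwoProp X :=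
  stmt_19_general X Y hYc P hproj hker hM hproper hnorming
end
end
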